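/- Let d ≥ 1, let Ω ⊆ ℝ^d be a Lebesgue-measurable set, and let F : ℝ^d → ℝ^d be injective on Ω such that at every x ∈ Ω, F has derivative within Ω equal to the invertible d×d matrix DF(x) with det DF(x) > 0. Let φ : ℝ^d → ℝ^d be differentiable at every point of F(Ω) with derivative Dφ, let p : ℝ^d → ℝ, and set ψ = φ ∘ F, q = p ∘ F. Then ∫_{F(Ω)} p(y) · tr(Dφ(y)) dy = ∫_Ω q(x) · tr(Dψ(x)·(DF(x))⁻¹) · det(DF(x)) dx, where Dψ(x) denotes the matrix of the derivative of ψ within Ω at x. -/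

import Mathlib

/-!
The change of variables formula turns the left side into `∫_Ω p(F x) tr(Dφ(F x)) |det DF x| dx`.
It remains to identify `Dψ x = Dφ(F x) DF x`, which the chain rule gives only where derivatives
within `Ω` are unique. Almost every point of `Ω` is a Lebesgue density point, and at a density
point `Ω` meets every small rescaled ball `x + r • B(v, ε)`, so its tangent cone is the whole
space: derivatives within `Ω` are unique there.
-/

open MeasureTheory Filter Metric Set
open scoped Topology Pointwise

section DensityPoint

variable {E : Type*} [NormedAddCommGroup E] [NormedSpace ℝ E] [MeasurableSpace E] [BorelSpace E]
  [FiniteDimensional ℝ E] (μ : Measure E) [μ.IsAddHaarMeasure]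

theorem tangentConeAt_eq_univ_of_density_one {s : Set E} {x : E}
    (hx : Tendsto (fun r => μ (s ∩ closedBall x r) / μ (closedBall x r)) (𝓝[>] 0) (𝓝 1)) :
    tangentConeAt ℝ s x = univ := by
  refine eq_univ_of_forall fun v => ?_
  rw [nhds_basis_ball.tangentConeAt_eq_biInter_closure, mem_iInter₂]
  intro δ hδ
  refine Metric.mem_closure_iff.2 fun ε hε => ?_
  have hsmall : ∀ᶠ r in 𝓝[>] (0 : ℝ), r * (‖v‖ + ε) < δ :=
    nhdsWithin_le_nhds <| (continuous_id.mul continuous_const).tendsto' 0 0 (zero_mul _)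
      |>.eventually (gt_mem_nhds hδ)
  obtain ⟨r, ⟨y, hys, hy⟩, hr, hrpos⟩ :=
    ((Measure.eventually_nonempty_inter_smul_of_density_one μ s x hx (ball v ε) measurableSet_ball
      (measure_ball_pos μ v hε).ne').and (hsmall.and self_mem_nhdsWithin)).exists
  rw [singleton_add] at hy
  obtain ⟨_, ⟨w, hw, rfl⟩, rfl⟩ := hy
  refine ⟨r⁻¹ • (r • w), ⟨r⁻¹, mem_univ _, r • w, ⟨?_, hys⟩, rfl⟩, ?_⟩
  · rw [mem_ball_zero_iff, norm_smul, Real.norm_of_nonneg (le_of_lt hrpos)]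
    calc r * ‖w‖ ≤ r * (‖v‖ + ε) := by
          gcongr
          exact norm_le_of_mem_closedBall (ball_subset_closedBall hw)
      _ < δ := hr
  · rw [inv_smul_smul₀ (ne_of_gt hrpos), dist_comm]
    exact hw

theorem uniqueDiffWithinAt_of_density_one {s : Set E} {x : E}
    (hx : Tendsto (fun r => μ (s ∩ closedBall x r) / μ (closedBall x r)) (𝓝[>] 0) (𝓝 1)) :
    UniqueDiffWithinAt ℝ s x := by
  have hcone := tangentConeAt_eq_univ_of_density_one μ hx
  exact ⟨by simp [hcone], mem_closure_of_nonempty_tangentConeAt (𝕜 := ℝ) (by simp [hcone])⟩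

theorem ae_uniqueDiffWithinAt (s : Set E) : ∀ᵐ x ∂μ.restrict s, UniqueDiffWithinAt ℝ s x := by
  filter_upwards [Besicovitch.ae_tendsto_measure_inter_div μ s] with x hx
  exact uniqueDiffWithinAt_of_density_one μ hx

end DensityPoint

section MatrixDerivative

variable {𝕜 : Type*} [RCLike 𝕜] {n : Type*} [Fintype n] [DecidableEq n]

theorem Matrix.det_toEuclideanCLM (A : Matrix n n 𝕜) :
    (Matrix.toEuclideanCLM (n := n) (𝕜 := 𝕜) A).det = A.det := by
  rw [ContinuousLinearMap.det, Matrix.coe_toEuclideanCLM_eq_toEuclideanLin, LinearMap.det_toLpLin]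

theorem UniqueDiffWithinAt.eq_mul_of_hasFDerivWithinAt_comp
    {f g : EuclideanSpace 𝕜 n → EuclideanSpace 𝕜 n} {s : Set (EuclideanSpace 𝕜 n)}
    {x : EuclideanSpace 𝕜 n} {A B C : Matrix n n 𝕜} (hs : UniqueDiffWithinAt 𝕜 s x)
    (hg : HasFDerivAt g (Matrix.toEuclideanCLM (𝕜 := 𝕜) B) (f x))
    (hf : HasFDerivWithinAt f (Matrix.toEuclideanCLM (𝕜 := 𝕜) A) s x)
    (hgf : HasFDerivWithinAt (g ∘ f) (Matrix.toEuclideanCLM (𝕜 := 𝕜) C) s x) :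
    C = B * A :=
  Matrix.toEuclideanCLM.injective <| by
    rw [map_mul]
    exact hs.eq hgf (hg.comp_hasFDerivWithinAt x hf)

end MatrixDerivative

theorem integral_image_pressure_divergence_eq_general
    (d : ℕ)
    (Ω : Set (EuclideanSpace ℝ (Fin d))) (hΩ : MeasurableSet Ω)
    (F : EuclideanSpace ℝ (Fin d) → EuclideanSpace ℝ (Fin d))
    (DF : EuclideanSpace ℝ (Fin d) → Matrix (Fin d) (Fin d) ℝ)
    (hinj : Set.InjOn F Ω)
    (hF : ∀ x ∈ Ω, HasFDerivWithinAt F (Matrix.toEuclideanCLM (𝕜 := ℝ) (DF x)) Ω x)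
    (hdet : ∀ x ∈ Ω, 0 < (DF x).det)
    (φ : EuclideanSpace ℝ (Fin d) → EuclideanSpace ℝ (Fin d))
    (Dφ : EuclideanSpace ℝ (Fin d) → Matrix (Fin d) (Fin d) ℝ)
    (hφ : ∀ y ∈ F '' Ω, HasFDerivAt φ (Matrix.toEuclideanCLM (𝕜 := ℝ) (Dφ y)) y)
    (p : EuclideanSpace ℝ (Fin d) → ℝ)
    (ψ : EuclideanSpace ℝ (Fin d) → EuclideanSpace ℝ (Fin d)) (hψ : ψ = φ ∘ F)
    (q : EuclideanSpace ℝ (Fin d) → ℝ) (hq : q = p ∘ F)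
    (Dψ : EuclideanSpace ℝ (Fin d) → Matrix (Fin d) (Fin d) ℝ)
    (hDψ : ∀ x ∈ Ω, HasFDerivWithinAt ψ (Matrix.toEuclideanCLM (𝕜 := ℝ) (Dψ x)) Ω x) :
    ∫ y in F '' Ω, p y * (Dφ y).trace
      = ∫ x in Ω, q x * (Dψ x * (DF x)⁻¹).trace * (DF x).det := by
  rw [integral_image_eq_integral_abs_det_fderiv_smul volume hΩ hF hinj]
  refine integral_congr_ae ?_
  filter_upwards [ae_uniqueDiffWithinAt volume Ω, ae_restrict_mem hΩ] with x hux hx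
  have hchain : Dψ x = Dφ (F x) * DF x :=
    hux.eq_mul_of_hasFDerivWithinAt_comp (hφ _ (mem_image_of_mem F hx)) (hF x hx)
      (hψ ▸ hDψ x hx)
  have hunit : IsUnit (DF x).det := (hdet x hx).ne'.isUnit
  rw [Matrix.det_toEuclideanCLM, abs_of_pos (hdet x hx), hchain,
    Matrix.mul_nonsing_inv_cancel_right _ _ hunit, hq, smul_eq_mul, Function.comp_apply]
  ring

/-- Pullback of the pressure/divergence term: for `F` injective on `Ω` with invertible
derivative matrices `DF x` (`det DF x > 0`), `φ` differentiable on `F '' Ω` with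
derivative matrix `Dφ`, `p : ℝ^d → ℝ`, and `ψ = φ ∘ F`, `q = p ∘ F`, the composition
`ψ` has derivative matrix `Dψ` within `Ω` and
`∫_{F(Ω)} p tr (Dφ) = ∫_Ω q tr (Dψ (DF)⁻¹) det (DF)`. -/
theorem integral_image_pressure_divergence_eq
    (d : ℕ) (hd : 1 ≤ d)
    (Ω : Set (EuclideanSpace ℝ (Fin d))) (hΩ : MeasurableSet Ω)
    (F : EuclideanSpace ℝ (Fin d) → EuclideanSpace ℝ (Fin d))
    (DF : EuclideanSpace ℝ (Fin d) → Matrix (Fin d) (Fin d) ℝ)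
    (hinj : Set.InjOn F Ω)
    (hF : ∀ x ∈ Ω, HasFDerivWithinAt F (Matrix.toEuclideanCLM (𝕜 := ℝ) (DF x)) Ω x)
    (hDFinv : ∀ x ∈ Ω, IsUnit (DF x))
    (hdet : ∀ x ∈ Ω, 0 < (DF x).det)
    (φ : EuclideanSpace ℝ (Fin d) → EuclideanSpace ℝ (Fin d))
    (Dφ : EuclideanSpace ℝ (Fin d) → Matrix (Fin d) (Fin d) ℝ)
    (hφ : ∀ y ∈ F '' Ω, HasFDerivAt φ (Matrix.toEuclideanCLM (𝕜 := ℝ) (Dφ y)) y)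
    (p : EuclideanSpace ℝ (Fin d) → ℝ)
    (ψ : EuclideanSpace ℝ (Fin d) → EuclideanSpace ℝ (Fin d)) (hψ : ψ = φ ∘ F)
    (q : EuclideanSpace ℝ (Fin d) → ℝ) (hq : q = p ∘ F)
    (Dψ : EuclideanSpace ℝ (Fin d) → Matrix (Fin d) (Fin d) ℝ)
    (hDψ : ∀ x ∈ Ω, HasFDerivWithinAt ψ (Matrix.toEuclideanCLM (𝕜 := ℝ) (Dψ x)) Ω x) :
    ∫ y in F '' Ω, p y * (Dφ y).trace
      = ∫ x in Ω, q x * (Dψ x * (DF x)⁻¹).trace * (DF x).det :=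
  integral_image_pressure_divergence_eq_general d Ω hΩ F DF hinj hF hdet φ Dφ hφ p ψ hψ q hq Dψ hDψ
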